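/- Let R be a finite commutative principal ideal ring with identity 1 ≠ 0 which is not decomposable (i.e., R is not isomorphic to a product of two nonzero rings) and is not an integral domain. If the zero-divisor graph Γ(R) is Hamiltonian, then α(Γ(R)) = 1. -/

import Mathlib

/-- The zero-divisor graph `Γ(R)`: vertices are the nonzero zero-divisors of `R`,
with distinct vertices `x`, `y` adjacent iff `x * y = 0`. -/
def zdvGraph (R : Type*) [CommRing R] :
    SimpleGraph {x : R // x ≠ 0 ∧ ∃ y ≠ 0, x * y = 0} where
  Adj x y := x ≠ y ∧ (x : R) * y = 0
  symm := ⟨fun x y ⟨hxy, h⟩ => ⟨hxy.symm, by rwa [mul_comm]⟩⟩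
  loopless := ⟨fun x ⟨h, _⟩ => h rfl⟩

/-- The independence number of a simple graph: the maximum cardinality of a set of
pairwise non-adjacent vertices. -/
noncomputable def indepNum {V : Type*} (G : SimpleGraph V) : ℕ :=
  sSup {n | ∃ s : Finset V, (s : Set V).Pairwise (fun a b => ¬ G.Adj a b) ∧ s.card = n}

universe u

/-- A ring is decomposable if it is isomorphic to a product of two nonzero rings. -/
def IsDecomposable (R : Type u) [CommRing R] : Prop :=
  ∃ (R₁ R₂ : Type u) (i₁ : CommRing R₁) (i₂ : CommRing R₂),
    Nontrivial R₁ ∧ Nontrivial R₂ ∧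
      (letI := i₁; letI := i₂; Nonempty (R ≃+* R₁ × R₂))

/-!
A finite ring without nontrivial idempotents is local, since its prime spectrum is finite,
discrete and connected; here its maximal ideal `𝔪` is principal, and the vertices of `Γ(R)` are
exactly the nonzero elements of `𝔪`. If `𝔪² = 0` the graph is complete, so `α(Γ(R)) = 1`.
Otherwise every element of `𝔪 \ 𝔪²` generates `𝔪`, so `𝔪 \ 𝔪²` is independent, and translating
`𝔪²` by one of its elements shows that it holds more than half of the vertices. That is impossible
in a Hamiltonian graph, where the successor map of the cycle sends an independent set injectively
into its complement.
-/

namespace SimpleGraph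

variable {V : Type*} {G : SimpleGraph V}

theorem Walk.IsHamiltonianCycle.ncard_le_ncard_compl_of_isIndepSet [Finite V] [DecidableEq V]
    {a : V} {p : G.Walk a a} (hp : p.IsHamiltonianCycle) {s : Set V} (hs : G.IsIndepSet s) :
    s.ncard ≤ sᶜ.ncard := by
  have hidx : ∀ x, ∃ i < p.length, p.getVert i = x := fun x => by
    obtain ⟨i, hi, hil⟩ := Walk.mem_support_iff_exists_getVert.mp (hp.mem_support x)
    rcases hil.lt_or_eq with hil | rfl
    · exact ⟨i, hil, hi⟩
    · exact ⟨0, hp.isCycle.three_le_length.trans_lt' (by norm_num), by simp [← hi]⟩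
  choose idx hidx_lt hidx using hidx
  have hadj : ∀ x, G.Adj x (p.getVert (idx x + 1)) := fun x => by
    simpa only [hidx] using p.adj_getVert_succ (hidx_lt x)
  refine Set.ncard_le_ncard_of_injOn (fun x => p.getVert (idx x + 1))
    (fun x hx hy => hs hx hy (hadj x).ne (hadj x)) (fun x _ y _ hxy => ?_) (Set.toFinite _)
  have := hp.isCycle.getVert_injOn (by simp [hidx_lt x]) (by simp [hidx_lt y]) hxy
  rw [← hidx x, ← hidx y, Nat.succ_injective this]

theorem indepNum_top [Finite V] [Nonempty V] : (⊤ : SimpleGraph V).indepNum = 1 := by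
  apply le_antisymm
  · obtain ⟨s, hs⟩ := (⊤ : SimpleGraph V).exists_isNIndepSet_indepNum
    rw [← hs.card_eq, Finset.card_le_one]
    intro x hx y hy
    by_contra hxy
    exact hs.isIndepSet hx hy hxy hxy
  · obtain ⟨v⟩ := ‹Nonempty V›
    simpa using IsIndepSet.card_le_indepNum (G := ⊤) (t := {v}) (by simp)

end SimpleGraph

theorem indepNum_eq_simpleGraph_indepNum {V : Type*} (G : SimpleGraph V) :
    indepNum G = G.indepNum := by
  simp only [indepNum, SimpleGraph.indepNum, SimpleGraph.isNIndepSet_iff,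
    SimpleGraph.isIndepSet_iff]

open IsLocalRing

theorem isDecomposable_of_isIdempotentElem {R : Type u} [CommRing R] {e : R}
    (he : IsIdempotentElem e) (he₀ : e ≠ 0) (he₁ : e ≠ 1) : IsDecomposable R := by
  have quotient_nontrivial : ∀ {f : R}, IsIdempotentElem f → f ≠ 1 →
      Nontrivial (R ⧸ Ideal.span {f}) := fun hf hf₁ =>
    Ideal.Quotient.nontrivial_iff.mpr fun h =>
      hf₁ ((IsIdempotentElem.iff_eq_one_of_isUnit (Ideal.span_singleton_eq_top.mp h)).mp hf)
  refine ⟨R ⧸ Ideal.span {e}, R ⧸ Ideal.span {1 - e}, _, _, quotient_nontrivial he he₁,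
    quotient_nontrivial he.one_sub (by simpa using he₀), ⟨RingEquiv.ofBijective _ <|
      RingHom.prod_bijective_of_isIdempotentElem he he.one_sub (add_sub_cancel e 1) ?_⟩⟩
  rw [mul_sub, mul_one, he.eq, sub_self]

theorem IsArtinianRing.isLocalRing_of_isIdempotentElem {R : Type*} [CommRing R] [Nontrivial R]
    [IsArtinianRing R] (h : ∀ e : R, IsIdempotentElem e → e = 0 ∨ e = 1) : IsLocalRing R := by
  have : PreconnectedSpace (PrimeSpectrum R) := preconnectedSpace_iff_clopen.mpr fun s hs => by
    obtain ⟨e, he, rfl⟩ := PrimeSpectrum.isClopen_iff.mp hs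
    rcases h e he with rfl | rfl <;> simp
  have := PreconnectedSpace.trivial_of_discrete (X := PrimeSpectrum R)
  have := MaximalSpectrum.toPrimeSpectrum_injective (R := R).subsingleton
  exact .of_singleton_maximalSpectrum

theorem isLocalRing_of_not_isDecomposable {R : Type u} [CommRing R] [Nontrivial R] [Finite R]
    (hR : ¬ IsDecomposable R) : IsLocalRing R :=
  IsArtinianRing.isLocalRing_of_isIdempotentElem fun e he => by
    by_contra! h
    exact hR (isDecomposable_of_isIdempotentElem he h.1 h.2)

section PrincipalMaximalIdeal

variable {R : Type*} [CommRing R] [IsLocalRing R] [(maximalIdeal R).IsPrincipal]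

theorem span_singleton_eq_maximalIdeal {x : R} (hx : x ∈ maximalIdeal R)
    (hx₂ : x ∉ maximalIdeal R ^ 2) : Ideal.span {x} = maximalIdeal R := by
  set π := Submodule.IsPrincipal.generator (maximalIdeal R)
  have hπ : maximalIdeal R = Ideal.span {π} :=
    (Submodule.IsPrincipal.span_singleton_generator _).symm
  obtain ⟨c, rfl⟩ := Ideal.mem_span_singleton'.mp (hπ ▸ hx)
  have hc : IsUnit c := by
    by_contra hc
    refine hx₂ ?_
    rw [pow_two]
    exact Ideal.mul_mem_mul ((mem_maximalIdeal c).mpr hc) (hπ ▸ Ideal.mem_span_singleton_self π)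
  rw [hπ, mul_comm, Ideal.span_singleton_mul_right_unit hc]

theorem mul_ne_zero_of_notMem_maximalIdeal_sq (h : maximalIdeal R ^ 2 ≠ ⊥) {x y : R}
    (hx : x ∈ maximalIdeal R) (hx₂ : x ∉ maximalIdeal R ^ 2)
    (hy : y ∈ maximalIdeal R) (hy₂ : y ∉ maximalIdeal R ^ 2) : x * y ≠ 0 := by
  rwa [Ne, ← Ideal.span_singleton_eq_bot, ← Ideal.span_singleton_mul_span_singleton,
    span_singleton_eq_maximalIdeal hx hx₂, span_singleton_eq_maximalIdeal hy hy₂, ← pow_two]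

end PrincipalMaximalIdeal

theorem exists_mem_maximalIdeal_notMem_sq {R : Type*} [CommRing R] [IsNoetherianRing R]
    [IsLocalRing R] (h : maximalIdeal R ^ 2 ≠ ⊥) :
    ∃ a ∈ maximalIdeal R, a ∉ maximalIdeal R ^ 2 := by
  by_contra! ha
  have hidem : IsIdempotentElem (maximalIdeal R) := by
    rw [IsIdempotentElem, ← pow_two]
    exact le_antisymm (Ideal.pow_le_self two_ne_zero) ha
  rcases (Ideal.isIdempotentElem_iff_eq_bot_or_top_of_isLocalRing _).mp hidem with hm | hm
  · exact h (by rw [hm, pow_two, Ideal.mul_bot])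
  · exact (maximalIdeal.isMaximal R).ne_top hm

section FiniteLocalRing

variable {R : Type*} [CommRing R] [Finite R] [IsLocalRing R]

theorem zdvGraph_vertex_iff {x : R} :
    (x ≠ 0 ∧ ∃ y ≠ 0, x * y = 0) ↔ x ≠ 0 ∧ x ∈ maximalIdeal R := by
  rw [mem_maximalIdeal, mem_nonunits_iff, isUnit_iff_mem_nonZeroDivisors_of_finite,
    notMem_nonZeroDivisors_iff_left]
  simp [Set.Nonempty, and_comm]

theorem zdvGraph_vertex_of_notMem_sq {x : R} (hx : x ∈ maximalIdeal R)
    (hx₂ : x ∉ maximalIdeal R ^ 2) : x ≠ 0 ∧ ∃ y ≠ 0, x * y = 0 :=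
  zdvGraph_vertex_iff.mpr ⟨by rintro rfl; exact hx₂ (zero_mem _), hx⟩

theorem zdvGraph_eq_top (h : maximalIdeal R ^ 2 = ⊥) : zdvGraph R = ⊤ := by
  ext v w
  refine ⟨fun hvw => hvw.1, fun hvw => ⟨hvw, ?_⟩⟩
  have := Ideal.mul_mem_mul (zdvGraph_vertex_iff.mp v.2).2 (zdvGraph_vertex_iff.mp w.2).2
  rwa [← pow_two, h, Ideal.mem_bot] at this

theorem zdvGraph_isIndepSet_notMem_sq [(maximalIdeal R).IsPrincipal] (h : maximalIdeal R ^ 2 ≠ ⊥) :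
    (zdvGraph R).IsIndepSet
      {v : {x : R // x ≠ 0 ∧ ∃ y ≠ 0, x * y = 0} | (v : R) ∉ maximalIdeal R ^ 2} :=
  fun v hv w hw _ hvw => mul_ne_zero_of_notMem_maximalIdeal_sq h
    (zdvGraph_vertex_iff.mp v.2).2 hv (zdvGraph_vertex_iff.mp w.2).2 hw hvw.2

theorem ncard_zdvVertex_mem_sq_lt_ncard_notMem_sq {a : R} (ha : a ∈ maximalIdeal R)
    (ha₂ : a ∉ maximalIdeal R ^ 2) :
    {v : {x : R // x ≠ 0 ∧ ∃ y ≠ 0, x * y = 0} | (v : R) ∈ maximalIdeal R ^ 2}.ncard <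
      {v : {x : R // x ≠ 0 ∧ ∃ y ≠ 0, x * y = 0} | (v : R) ∉ maximalIdeal R ^ 2}.ncard := by
  set s := {v : {x : R // x ≠ 0 ∧ ∃ y ≠ 0, x * y = 0} | (v : R) ∉ maximalIdeal R ^ 2}
  have hsq_le : maximalIdeal R ^ 2 ≤ maximalIdeal R := Ideal.pow_le_self two_ne_zero
  have has : a ∈ Subtype.val '' s := ⟨⟨a, zdvGraph_vertex_of_notMem_sq ha ha₂⟩, ha₂, rfl⟩
  calc _ ≤ (Subtype.val '' s \ {a}).ncard := by
        refine Set.ncard_le_ncard_of_injOn (fun v => (v : R) + a) (fun v hv => ?_)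
          (fun v _ w _ h => Subtype.ext (add_right_cancel h)) (Set.toFinite _)
        have hva₂ : (v : R) + a ∉ maximalIdeal R ^ 2 := fun h =>
          ha₂ (by simpa using sub_mem h hv)
        refine ⟨⟨⟨v + a, zdvGraph_vertex_of_notMem_sq (add_mem (hsq_le hv) ha) hva₂⟩, hva₂, rfl⟩,
          fun h => v.2.1 (by simpa using h)⟩
    _ < (Subtype.val '' s).ncard := Set.ncard_sdiff_singleton_lt_of_mem has
    _ = s.ncard := Set.ncard_image_of_injective _ Subtype.val_injective

end FiniteLocalRing

theorem maximalIdeal_sq_eq_bot_of_isHamiltonian {R : Type*} [CommRing R] [Fintype R]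
    [DecidableEq R] [IsLocalRing R] [(maximalIdeal R).IsPrincipal]
    (hham : (zdvGraph R).IsHamiltonian) : maximalIdeal R ^ 2 = ⊥ := by
  by_contra h
  obtain ⟨a, ha, ha₂⟩ := exists_mem_maximalIdeal_notMem_sq h
  have haa : a * a ∈ maximalIdeal R ^ 2 := by rw [pow_two]; exact Ideal.mul_mem_mul ha ha
  have hcard : 1 < Fintype.card {x : R // x ≠ 0 ∧ ∃ y ≠ 0, x * y = 0} :=
    Fintype.one_lt_card_iff.mpr ⟨⟨a, zdvGraph_vertex_of_notMem_sq ha ha₂⟩,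
      ⟨a * a, zdvGraph_vertex_iff.mpr ⟨mul_ne_zero_of_notMem_maximalIdeal_sq h ha ha₂ ha ha₂,
        Ideal.mul_mem_left _ a ha⟩⟩, fun he => ha₂ (by rwa [Subtype.mk.inj he])⟩
  obtain ⟨_, p, hp⟩ := hham hcard.ne'
  have hle := hp.ncard_le_ncard_compl_of_isIndepSet (zdvGraph_isIndepSet_notMem_sq h)
  have hlt := ncard_zdvVertex_mem_sq_lt_ncard_notMem_sq ha ha₂
  simp only [Set.compl_ofPred, not_not] at hle
  omega

theorem stmt6_general (R : Type u) [CommRing R] [Nontrivial R] [Fintype R] [DecidableEq R]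
    [IsPrincipalIdealRing R] (hnd : ¬ IsDecomposable R)
    (hham : (zdvGraph R).IsHamiltonian) :
    indepNum (zdvGraph R) = 1 := by
  have := isLocalRing_of_not_isDecomposable hnd
  have := hham.connected.nonempty
  rw [indepNum_eq_simpleGraph_indepNum,
    zdvGraph_eq_top (maximalIdeal_sq_eq_bot_of_isHamiltonian hham)]
  exact SimpleGraph.indepNum_top

theorem stmt6 (R : Type u) [CommRing R] [Nontrivial R] [Fintype R] [DecidableEq R]
    [IsPrincipalIdealRing R] (hnd : ¬ IsDecomposable R) (hdom : ¬ IsDomain R)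
    (hham : (zdvGraph R).IsHamiltonian) :
    indepNum (zdvGraph R) = 1 :=
  stmt6_general R hnd hham
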